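/- Identify ℝ² with ℂ. Let d_1,…,d_{12} be the points 0, i, 2i, 3i, 3, 3+i, 3+2i, 3+3i, 4+3i, 5+3i, 6+3i, 7+3i, let f_k(x) = (x + d_k)/4 for 1 ≤ k ≤ 12, and let E₃ be the unique nonempty compact subset of ℝ² with E₃ = ⋃_{k=1}^{12} f_k(E₃). Let Q be the closed trapezoid which is the convex hull of the four points 0, 1, i, 7/3 + i; let A = {t + i : 1 ≤ t ≤ 7/3} and B = {5/8 + t·i : 0 ≤ t ≤ 1}. Then A ⊆ E₃ ⊆ Q and B ∩ E₃ = ∅. -/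

import Mathlib

/-!
The digit maps are `1/4`-contractions, so a bounded set that is covered by its own images
under them lies in every closed nonempty set that they map into itself (the distance to such a
set shrinks by a factor `1/4` at each step). The trapezoid, cut out by four half-planes, is
mapped into itself, which traps `E₃`; the top edge `A` is covered by its images under the five
maps with digits `m + 3i`, so `A ⊆ E₃`. Finally every `f_k` maps the trapezoid, whose real parts
lie in `[0, 7/3]`, to real parts in `[0, 7/12] ∪ [3/4, 7/3]`, missing the line `re z = 5/8`.
-/

open Complex

/-- The twelve digits `0, i, 2i, 3i, 3, 3+i, 3+2i, 3+3i, 4+3i, 5+3i, 6+3i, 7+3i`. -/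
noncomputable def d12 : Fin 12 → ℂ :=
  ![0, I, 2 * I, 3 * I, 3, 3 + I, 3 + 2 * I, 3 + 3 * I,
    4 + 3 * I, 5 + 3 * I, 6 + 3 * I, 7 + 3 * I]

/-- The maps `f_k(x) = (x + d_k)/4`. -/
noncomputable def f12 (k : Fin 12) (x : ℂ) : ℂ := (x + d12 k) / 4

open Metric Set Filter Topology NNReal

section
variable {X ι : Type*} [PseudoMetricSpace X]

theorem infDist_le_mul_infDist_of_mapsTo {f : X → X} {c : ℝ≥0} (hf : LipschitzWith c f)
    {K : Set X} (hK : MapsTo f K K) (x : X) : infDist (f x) K ≤ c * infDist x K := by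
  rcases K.eq_empty_or_nonempty with rfl | hne
  · simp
  have : Nonempty K := hne.to_subtype
  rw [infDist_eq_iInf (x := x), Real.mul_iInf_of_nonneg c.coe_nonneg]
  exact le_ciInf fun y => (infDist_le_dist_of_mem (hK y.2)).trans (hf.dist_le_mul x y)

theorem subset_of_subset_iUnion_image_of_mapsTo {f : ι → X → X} {c : ℝ≥0}
    (hf : ∀ i, LipschitzWith c (f i)) (hc : c < 1) {A K : Set X} (hA : Bornology.IsBounded A)
    (hAf : A ⊆ ⋃ i, f i '' A) (hK : IsClosed K) (hKne : K.Nonempty)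
    (hKf : ∀ i, MapsTo (f i) K K) : A ⊆ K := by
  obtain ⟨q, hq⟩ := hKne
  obtain ⟨r, hr⟩ := hA.subset_closedBall q
  have hdecay : ∀ n : ℕ, ∀ a ∈ A, infDist a K ≤ c ^ n * r := by
    intro n
    induction n with
    | zero => exact fun a ha => by simpa using (infDist_le_dist_of_mem hq).trans (hr ha)
    | succ n ih =>
      intro a ha
      obtain ⟨i, b, hb, rfl⟩ := mem_iUnion.1 (hAf ha)
      calc infDist (f i b) K
          ≤ c * infDist b K := infDist_le_mul_infDist_of_mapsTo (hf i) (hKf i) b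
        _ ≤ c * (c ^ n * r) := by gcongr; exact ih b hb
        _ = c ^ (n + 1) * r := by ring
  intro a ha
  have hlim : Tendsto (fun n : ℕ => (c : ℝ) ^ n * r) atTop (𝓝 0) := by
    simpa using (tendsto_pow_atTop_nhds_zero_of_lt_one c.coe_nonneg hc).mul_const r
  have hzero : infDist a K = 0 :=
    le_antisymm (ge_of_tendsto' hlim fun n => hdecay n a ha) infDist_nonneg
  rw [← hK.closure_eq, mem_closure_iff_infDist_zero ⟨q, hq⟩]
  exact hzero
end

lemma d12_bounds (k : Fin 12) :
    0 ≤ (d12 k).re ∧ 0 ≤ (d12 k).im ∧ (d12 k).im ≤ 3 ∧ 3 * (d12 k).re ≤ 9 + 4 * (d12 k).im := by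
  fin_cases k <;> norm_num [d12]

lemma d12_re_eq_zero_or_three_le (k : Fin 12) : (d12 k).re = 0 ∨ 3 ≤ (d12 k).re := by
  fin_cases k <;> norm_num [d12]

lemma f12_re (k : Fin 12) (x : ℂ) : (f12 k x).re = (x.re + (d12 k).re) / 4 := by
  simp [f12]

lemma f12_im (k : Fin 12) (x : ℂ) : (f12 k x).im = (x.im + (d12 k).im) / 4 := by
  simp [f12]

lemma lipschitzWith_f12 (k : Fin 12) : LipschitzWith (1 / 4) (f12 k) :=
  LipschitzWith.of_dist_le_mul fun x y => by
    rw [Complex.dist_eq, Complex.dist_eq, f12, f12, div_sub_div_same, add_sub_add_right_eq_sub,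
      norm_div]
    norm_num [div_eq_inv_mul]

def trapezoid : Set ℂ := {z | 0 ≤ z.im ∧ z.im ≤ 1 ∧ 0 ≤ z.re ∧ 3 * z.re ≤ 3 + 4 * z.im}

lemma isClosed_trapezoid : IsClosed trapezoid := by
  simp only [trapezoid, ofPred_and]
  apply_rules [IsClosed.inter, isClosed_le] <;> fun_prop

lemma mapsTo_f12_trapezoid (k : Fin 12) : MapsTo (f12 k) trapezoid trapezoid := by
  rintro z ⟨h1, h2, h3, h4⟩
  obtain ⟨g1, g2, g3, g4⟩ := d12_bounds k
  refine ⟨?_, ?_, ?_, ?_⟩ <;> simp only [f12_re, f12_im] <;> linarith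

lemma trapezoid_subset_convexHull : trapezoid ⊆ convexHull ℝ {0, 1, I, 7 / 3 + I} := by
  rintro z ⟨hy0, hy1, hx0, hxy⟩
  set V : Set ℂ := {0, 1, I, 7 / 3 + I}
  have hconv : Convex ℝ (convexHull ℝ V) := convex_convexHull ℝ V
  have hV : V ⊆ convexHull ℝ V := subset_convexHull ℝ V
  have hden : 0 < 1 + 4 * z.im / 3 := by linarith
  -- `z` lies on the horizontal segment from `s` (bottom edge) to `s * (7/3) + i` (top edge).
  set s := z.re / (1 + 4 * z.im / 3) with hs_def
  have hs0 : 0 ≤ s := div_nonneg hx0 hden.le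
  have hs1 : 0 ≤ 1 - s := by rw [sub_nonneg, div_le_one hden]; linarith
  have hbottom : (s : ℂ) ∈ convexHull ℝ V := by
    convert hconv (hV (by simp [V] : (0 : ℂ) ∈ V)) (hV (by simp [V] : (1 : ℂ) ∈ V)) hs1 hs0
      (sub_add_cancel 1 s) using 1
    simp
  have htop : (s : ℂ) * (7 / 3) + I ∈ convexHull ℝ V := by
    convert hconv (hV (by simp [V] : I ∈ V)) (hV (by simp [V] : 7 / 3 + I ∈ V)) hs1 hs0
      (sub_add_cancel 1 s) using 1
    apply Complex.ext <;> simp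
  convert hconv hbottom htop (sub_nonneg.2 hy1) hy0 (sub_add_cancel 1 z.im) using 1
  apply Complex.ext <;> simp
  rw [hs_def]; field_simp; ring

lemma re_f12_ne_five_eighths (k : Fin 12) {w : ℂ} (hw : w ∈ trapezoid) : (f12 k w).re ≠ 5 / 8 := by
  obtain ⟨h1, h2, h3, h4⟩ := hw
  rw [f12_re]
  rcases d12_re_eq_zero_or_three_le k with hd | hd <;> intro h <;> linarith

def topEdge : Set ℂ := (fun t : ℝ => (t : ℂ) + I) '' Icc 1 (7 / 3)

lemma f12_ofReal_add_I {k : Fin 12} (hk : (d12 k).im = 3) (u : ℝ) :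
    f12 k (u + I) = ((u + (d12 k).re) / 4 : ℝ) + I := by
  apply Complex.ext <;> simp [f12_re, f12_im, hk]; norm_num

-- The top-row digits `m + 3i` (`3 ≤ m ≤ 7`) handle `4t ∈ [m + 1, m + 7/3]`; these cover `[4, 28/3]`.
lemma exists_d12_im_eq_three {t : ℝ} (ht : t ∈ Icc (1 : ℝ) (7 / 3)) :
    ∃ k, (d12 k).im = 3 ∧ 4 * t - (d12 k).re ∈ Icc (1 : ℝ) (7 / 3) := by
  obtain ⟨ht1, ht2⟩ := ht
  rcases le_or_gt t (4 / 3) with h1 | h1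
  · refine ⟨7, ?_, ?_, ?_⟩ <;> simp [d12, Matrix.cons_val] <;> linarith
  rcases le_or_gt t (19 / 12) with h2 | h2
  · refine ⟨8, ?_, ?_, ?_⟩ <;> simp [d12, Matrix.cons_val] <;> linarith
  rcases le_or_gt t (11 / 6) with h3 | h3
  · refine ⟨9, ?_, ?_, ?_⟩ <;> simp [d12, Matrix.cons_val] <;> linarith
  rcases le_or_gt t (25 / 12) with h4 | h4
  · refine ⟨10, ?_, ?_, ?_⟩ <;> simp [d12, Matrix.cons_val] <;> linarith
  · refine ⟨11, ?_, ?_, ?_⟩ <;> simp [d12, Matrix.cons_val] <;> linarith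

lemma topEdge_subset_iUnion_image : topEdge ⊆ ⋃ k, f12 k '' topEdge := by
  rintro _ ⟨t, ht, rfl⟩
  obtain ⟨k, hk, hu⟩ := exists_d12_im_eq_three ht
  refine mem_iUnion.2 ⟨k, _, ⟨_, hu, rfl⟩, ?_⟩
  rw [f12_ofReal_add_I hk]
  congr 2; ring

/-- Let `E₃ ⊆ ℂ ≅ ℝ²` be the attractor of the twelve maps `f_k`.
Let `Q` be the closed trapezoid `conv{0, 1, i, 7/3 + i}`, `A = {t + i : 1 ≤ t ≤ 7/3}`
and `B = {5/8 + t·i : 0 ≤ t ≤ 1}`. Then `A ⊆ E₃ ⊆ Q` and `B ∩ E₃ = ∅`. -/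
theorem E3_trapezoid_bounds
    (E₃ : Set ℂ) (hne : E₃.Nonempty) (hc : IsCompact E₃)
    (hE : E₃ = ⋃ k : Fin 12, f12 k '' E₃) :
    (fun t : ℝ => (t : ℂ) + I) '' Set.Icc (1 : ℝ) (7 / 3) ⊆ E₃
    ∧ E₃ ⊆ convexHull ℝ ({0, 1, I, 7 / 3 + I} : Set ℂ)
    ∧ (fun t : ℝ => (5 / 8 : ℂ) + (t : ℂ) * I) '' Set.Icc (0 : ℝ) 1 ∩ E₃ = ∅ := by
  have hcover : E₃ ⊆ ⋃ k, f12 k '' E₃ := hE.subset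
  have hmaps (k : Fin 12) : MapsTo (f12 k) E₃ E₃ :=
    (mapsTo_image _ _).mono_right ((subset_iUnion (fun k => f12 k '' E₃) k).trans hE.superset)
  have hEQ : E₃ ⊆ trapezoid :=
    subset_of_subset_iUnion_image_of_mapsTo lipschitzWith_f12 (by norm_num) hc.isBounded hcover
      isClosed_trapezoid ⟨0, by norm_num [trapezoid]⟩ mapsTo_f12_trapezoid
  refine ⟨?_, hEQ.trans trapezoid_subset_convexHull, ?_⟩
  · have hbdd : Bornology.IsBounded topEdge := (isCompact_Icc.image (by fun_prop)).isBounded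
    exact subset_of_subset_iUnion_image_of_mapsTo lipschitzWith_f12 (by norm_num) hbdd
      topEdge_subset_iUnion_image hc.isClosed hne hmaps
  · refine eq_empty_of_forall_notMem ?_
    rintro _ ⟨⟨t, -, rfl⟩, hz⟩
    obtain ⟨k, w, hw, hwz⟩ := mem_iUnion.1 (hcover hz)
    exact re_f12_ne_five_eighths k (hEQ hw) (by simp [hwz])
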